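/- arXiv:math/0611409 — 8 statements merged into one kernel-verified Lean document; each statement's English description precedes it below -/
import Mathlib

section
/- Let d ≥ 2 be an integer, let G = SL₂(ℤ) × SL₂(ℤ), and let H ≤ G be the subgroup of pairs (A,B) such that A ≡ B (mod d), i.e. the images of A and B under the entrywise reduction homomorphism SL₂(ℤ) → SL₂(ℤ/dℤ) coincide. Let Z ≤ G be the subgroup generated by (−I, I) and (I, −I), and let H̄ be the image of H in the quotient group G/Z. Then the index of H̄ in G/Z equals 6 if d = 2, and, as an equality of rational numbers, equals (1/2)·d³·∑_{r ∣ d} μ(r)/r² if d > 2. -/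
open scoped BigOperators

/-- The entrywise reduction homomorphism `SL₂(ℤ) → SL₂(ℤ/dℤ)`. -/
def redSL (d : ℕ) :
    Matrix.SpecialLinearGroup (Fin 2) ℤ →* Matrix.SpecialLinearGroup (Fin 2) (ZMod d) :=
  Matrix.SpecialLinearGroup.map (Int.castRingHom (ZMod d))

/-- The subgroup `H = {(A,B) ∈ SL₂(ℤ) × SL₂(ℤ) : A ≡ B (mod d)}`, i.e. the pairs whose
entrywise reductions mod `d` coincide. -/
def congSubgroup (d : ℕ) :
    Subgroup (Matrix.SpecialLinearGroup (Fin 2) ℤ × Matrix.SpecialLinearGroup (Fin 2) ℤ) :=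
  MonoidHom.eqLocus ((redSL d).comp (MonoidHom.fst _ _)) ((redSL d).comp (MonoidHom.snd _ _))

/-- The element `-I` of `SL₂(ℤ)`. -/
def negOneSL : Matrix.SpecialLinearGroup (Fin 2) ℤ :=
  ⟨-1, by norm_num [Matrix.det_neg]⟩

/-- The subgroup `Z ≤ SL₂(ℤ) × SL₂(ℤ)` generated by `(-I, I)` and `(I, -I)`. -/
def signSubgroup :
    Subgroup (Matrix.SpecialLinearGroup (Fin 2) ℤ × Matrix.SpecialLinearGroup (Fin 2) ℤ) :=
  Subgroup.closure {(negOneSL, 1), (1, negOneSL)}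

lemma negOneSL_commute (A : Matrix.SpecialLinearGroup (Fin 2) ℤ) :
    A * negOneSL = negOneSL * A := by
  apply Subtype.ext
  show (A : Matrix (Fin 2) (Fin 2) ℤ) * (-1) = (-1) * (A : Matrix (Fin 2) (Fin 2) ℤ)
  rw [mul_neg_one, neg_one_mul]

lemma signSubgroup_le_center :
    signSubgroup ≤
      Subgroup.center (Matrix.SpecialLinearGroup (Fin 2) ℤ × Matrix.SpecialLinearGroup (Fin 2) ℤ) := by
  rw [signSubgroup, Subgroup.closure_le]
  rintro x (rfl | rfl) <;>
  · rw [SetLike.mem_coe, Subgroup.mem_center_iff]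
    rintro ⟨g1, g2⟩
    refine Prod.ext ?_ ?_ <;>
      simp [Prod.mk_mul_mk, negOneSL_commute]

instance signSubgroup_normal : signSubgroup.Normal := by
  constructor
  intro n hn g
  have h := (Subgroup.mem_center_iff.mp (signSubgroup_le_center hn)) g
  rw [h, mul_inv_cancel_right]
  exact hn

/-!
Reduction `SL₂(ℤ) → SL₂(ℤ/d)` is surjective: lift the first column of `M` to a coprime integer
column and complete it to some `A ∈ SL₂(ℤ)`; then `(A mod d)⁻¹ M` fixes `e₀`, so it is a
transvection, which lifts as well.

Consequently `H Z` is the preimage of the diagonal of `Q × Q`, where `Q = SL₂(ℤ/d) / ⟨-1⟩`, so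
`[G/Z : H̄] = [G : H Z] = |Q| = |SL₂(ℤ/d)| / ord(-1)`, and `-1` has order `2` for `d > 2` and
order `1` for `d = 2`.

By orbit–stabilizer for the action on columns, `|SL₂(R)| = |R| · #{coprime pairs in R²}`, and a
Möbius sieve over the divisors of `d` counts the coprime pairs of `(ℤ/d)²` as
`d² ∑_{r ∣ d} μ(r)/r²`.
-/
open Matrix MatrixGroups MulAction Finset ArithmeticFunction
open scoped ArithmeticFunction.Moebius

namespace Matrix.SpecialLinearGroup

variable {R : Type*} [CommRing R]

lemma smul_single_zero (A : SL(2, R)) : A • (Pi.single 0 1 : Fin 2 → R) = ![A 0 0, A 1 0] := by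
  ext i
  fin_cases i <;> simp [SpecialLinearGroup.smul_def]

lemma eq_transvection_of_mem_stabilizer {A : SL(2, R)}
    (hA : A ∈ stabilizer SL(2, R) (Pi.single 0 1 : Fin 2 → R)) :
    A = transvection zero_ne_one (A 0 1) := by
  rw [mem_stabilizer_iff, smul_single_zero] at hA
  have h00 : A 0 0 = 1 := by simpa using congr_fun hA 0
  have h10 : A 1 0 = 0 := by simpa using congr_fun hA 1
  have hdet : A 0 0 * A 1 1 - A 0 1 * A 1 0 = 1 := by rw [← det_fin_two]; exact A.2
  rw [h00, h10] at hdet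
  ext i j
  fin_cases i <;> fin_cases j <;> simp [transvection_coe, h00, h10]
  linear_combination hdet

lemma transvection_mem_stabilizer (b : R) :
    transvection zero_ne_one b ∈ stabilizer SL(2, R) (Pi.single 0 1 : Fin 2 → R) :=
  transvection_smul_single_fst zero_ne_one b

def stabilizerSingleZeroEquiv : stabilizer SL(2, R) (Pi.single 0 1 : Fin 2 → R) ≃ R where
  toFun A := A.1 0 1
  invFun b := ⟨transvection zero_ne_one b, transvection_mem_stabilizer b⟩
  left_inv A := Subtype.ext (eq_transvection_of_mem_stabilizer A.2).symm
  right_inv b := by simp [transvection_coe]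

lemma orbit_single_zero :
    orbit SL(2, R) (Pi.single 0 1 : Fin 2 → R) = {v | IsCoprime (v 0) (v 1)} := by
  ext v
  constructor
  · rintro ⟨A, rfl⟩
    simpa [smul_single_zero] using A.isCoprime_col 0
  · intro h
    obtain ⟨A, h0, h1⟩ := IsCoprime.exists_SL2_col h 0
    refine ⟨A, ?_⟩
    ext i
    fin_cases i <;> simp [smul_single_zero, h0, h1]

theorem card_eq_card_isCoprime_mul_card [Finite R] :
    Nat.card SL(2, R) = Nat.card {v : Fin 2 → R // IsCoprime (v 0) (v 1)} * Nat.card R := by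
  rw [← (stabilizer SL(2, R) (Pi.single 0 1 : Fin 2 → R)).index_mul_card,
    Nat.card_congr stabilizerSingleZeroEquiv, Subgroup.index,
    ← Nat.card_congr (orbitEquivQuotientStabilizer _ _), orbit_single_zero]
  rfl

end Matrix.SpecialLinearGroup

theorem ZMod.isCoprime_natCast_iff {n x y : ℕ} :
    IsCoprime (x : ZMod n) (y : ZMod n) ↔ (x.gcd y).Coprime n := by
  constructor
  · intro h
    set g := (x.gcd y).gcd n
    have hg : g ∣ n := Nat.gcd_dvd_right _ _
    have hx : ((x : ℕ) : ZMod g) = 0 :=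
      (ZMod.natCast_eq_zero_iff _ _).2 ((Nat.gcd_dvd_left _ _).trans (Nat.gcd_dvd_left _ _))
    have hy : ((y : ℕ) : ZMod g) = 0 :=
      (ZMod.natCast_eq_zero_iff _ _).2 ((Nat.gcd_dvd_left _ _).trans (Nat.gcd_dvd_right _ _))
    have h0 := h.map (ZMod.castHom hg (ZMod g))
    rw [map_natCast, map_natCast, hx, hy, isCoprime_zero_left, isUnit_zero_iff, eq_comm,
      ← Nat.cast_one, ZMod.natCast_eq_zero_iff, Nat.dvd_one] at h0
    exact h0
  · intro h
    obtain ⟨u, v, huv⟩ := Nat.isCoprime_iff_coprime.2 h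
    refine ⟨u * x.gcdA y, u * x.gcdB y, ?_⟩
    have hbez := congr_arg (Int.cast : ℤ → ZMod n) huv
    rw [Nat.gcd_eq_gcd_ab] at hbez
    push_cast at hbez
    rw [ZMod.natCast_self] at hbez
    linear_combination hbez

theorem Nat.coprime_add_mul_prod_primeFactors {a b n : ℕ} (ha : a ≠ 0)
    (h : (a.gcd b).Coprime n) : a.Coprime (b + n * ∏ p ∈ a.primeFactors with ¬ p ∣ b, p) := by
  refine Nat.coprime_of_dvd fun p hp hpa hpsum => ?_
  by_cases hpb : p ∣ b
  · have hpn : ¬ p ∣ n := fun hpn =>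
      hp.one_lt.ne' (Nat.eq_one_of_dvd_one (h ▸ Nat.dvd_gcd (Nat.dvd_gcd hpa hpb) hpn))
    have hpk : ¬ p ∣ ∏ p ∈ a.primeFactors with ¬ p ∣ b, p := fun hpk => by
      obtain ⟨q, hq, hpq⟩ := hp.prime.exists_mem_finset_dvd hpk
      rw [mem_filter, Nat.mem_primeFactors] at hq
      exact hq.2 ((Nat.prime_dvd_prime_iff_eq hp hq.1.1).1 hpq ▸ hpb)
    exact hp.prime.not_dvd_mul hpn hpk ((Nat.dvd_add_right hpb).1 hpsum)
  · have hpk : p ∣ ∏ p ∈ a.primeFactors with ¬ p ∣ b, p :=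
      dvd_prod_of_mem _ (by simp [hp, hpa, ha, hpb])
    exact hpb ((Nat.dvd_add_left (dvd_mul_of_dvd_right hpk n)).1 hpsum)

theorem ZMod.exists_isCoprime_lift {n : ℕ} [NeZero n] {a b : ZMod n} (h : IsCoprime a b) :
    ∃ x y : ℤ, IsCoprime x y ∧ (x : ZMod n) = a ∧ (y : ZMod n) = b := by
  -- `a.val + n` rather than `a.val`: the lift of `a` has to be nonzero.
  set k := ∏ p ∈ (a.val + n).primeFactors with ¬ p ∣ b.val, p
  refine ⟨(a.val + n : ℕ), (b.val + n * k : ℕ), Nat.isCoprime_iff_coprime.2 ?_, ?_, ?_⟩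
  · refine Nat.coprime_add_mul_prod_primeFactors (by have := NeZero.ne n; omega) ?_
    rw [← ZMod.isCoprime_natCast_iff, Nat.cast_add, ZMod.natCast_self, add_zero,
      ZMod.natCast_zmod_val, ZMod.natCast_zmod_val]
    exact h
  · simp
  · simp

lemma redSL_transvection (n : ℕ) (t : ℤ) :
    redSL n (SpecialLinearGroup.transvection zero_ne_one t) =
      SpecialLinearGroup.transvection zero_ne_one (t : ZMod n) := by
  ext i j
  fin_cases i <;> fin_cases j <;> simp [redSL, SpecialLinearGroup.transvection_coe]

theorem redSL_surjective (n : ℕ) [NeZero n] : Function.Surjective (redSL n) := by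
  intro M
  obtain ⟨x, y, hxy, hx, hy⟩ := ZMod.exists_isCoprime_lift (M.isCoprime_col 0)
  obtain ⟨A, hA0, hA1⟩ := hxy.exists_SL2_col 0
  have hstab : (redSL n A)⁻¹ * M ∈ stabilizer SL(2, ZMod n) (Pi.single 0 1 : Fin 2 → ZMod n) := by
    rw [mem_stabilizer_iff, mul_smul, inv_smul_eq_iff, SpecialLinearGroup.smul_single_zero,
      SpecialLinearGroup.smul_single_zero]
    simp [redSL, hA0, hA1, hx, hy]
  obtain ⟨t, ht⟩ := ZMod.intCast_surjective (((redSL n A)⁻¹ * M) 0 1)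
  refine ⟨A * SpecialLinearGroup.transvection zero_ne_one t, ?_⟩
  rw [map_mul, redSL_transvection, ht, ← SpecialLinearGroup.eq_transvection_of_mem_stabilizer hstab,
    mul_inv_cancel_left]

namespace ArithmeticFunction

theorem sum_divisors_moebius {R : Type*} [Ring R] (m : ℕ) :
    ∑ r ∈ m.divisors, (μ r : R) = if m = 1 then 1 else 0 := by
  simp_rw [← intCoe_apply]
  rw [← coe_mul_zeta_apply, coe_moebius_mul_coe_zeta, ArithmeticFunction.one_apply]

theorem card_filter_eq_one_eq_sum_moebius {ι R : Type*} [Ring R] (s : Finset ι) (g : ι → ℕ)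
    {n : ℕ} (hn : n ≠ 0) (hg : ∀ x ∈ s, g x ∣ n) :
    (#{x ∈ s | g x = 1} : R) = ∑ r ∈ n.divisors, (μ r : R) * #{x ∈ s | r ∣ g x} := by
  calc (#{x ∈ s | g x = 1} : R) = ∑ x ∈ s, ∑ r ∈ (g x).divisors, (μ r : R) := by
        simp only [natCast_card_filter, sum_divisors_moebius]
    _ = ∑ x ∈ s, ∑ r ∈ n.divisors, if r ∣ g x then (μ r : R) else 0 :=
        sum_congr rfl fun x hx => by rw [← sum_filter, Nat.divisors_filter_dvd_of_dvd hn (hg x hx)]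
    _ = ∑ r ∈ n.divisors, (μ r : R) * #{x ∈ s | r ∣ g x} := by
        rw [sum_comm]
        simp only [natCast_card_filter, mul_sum, mul_ite, mul_one, mul_zero]

end ArithmeticFunction

theorem ZMod.card_filter_dvd_val_mul {n r : ℕ} [NeZero n] (hr : r ∣ n) :
    #{c : ZMod n | r ∣ c.val} * r = n := by
  let f := (ZMod.castHom hr (ZMod r)).toAddMonoidHom
  have hker : ∀ c, c ∈ f.ker ↔ r ∣ c.val := fun c => by
    rw [AddMonoidHom.mem_ker]
    change ZMod.castHom hr (ZMod r) c = 0 ↔ _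
    rw [ZMod.castHom_apply, ZMod.cast_eq_val, ZMod.natCast_eq_zero_iff]
  have hrange : f.range = ⊤ := AddMonoidHom.range_eq_top.2 (ZMod.castHom_surjective hr)
  have := f.ker.card_mul_index
  rw [AddSubgroup.index_ker, hrange, AddSubgroup.card_top, Nat.card_zmod, Nat.card_zmod,
    Nat.card_congr (Equiv.subtypeEquivRight hker), Nat.card_eq_fintype_card,
    Fintype.card_subtype] at this
  exact this

theorem ZMod.card_isCoprime (n : ℕ) [NeZero n] :
    (Nat.card {v : Fin 2 → ZMod n // IsCoprime (v 0) (v 1)} : ℚ) =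
      n ^ 2 * ∑ r ∈ n.divisors, (μ r : ℚ) / r ^ 2 := by
  let g : (Fin 2 → ZMod n) → ℕ := fun v => ((v 0).val.gcd (v 1).val).gcd n
  have hcop : ∀ v : Fin 2 → ZMod n, IsCoprime (v 0) (v 1) ↔ g v = 1 := fun v => by
    rw [← ZMod.natCast_zmod_val (v 0), ← ZMod.natCast_zmod_val (v 1), ZMod.isCoprime_natCast_iff]
  have hcount : ∀ r ∈ n.divisors, (#{v | r ∣ g v} : ℚ) = n ^ 2 / r ^ 2 := fun r hr => by
    have hrn := Nat.dvd_of_mem_divisors hr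
    have hfilter : ({v | r ∣ g v} : Finset (Fin 2 → ZMod n)) =
        Fintype.piFinset fun _ => {c : ZMod n | r ∣ c.val} := by
      ext v
      simp [g, Nat.dvd_gcd_iff, hrn, Fin.forall_fin_two]
    have hr0 : (r : ℚ) ≠ 0 := Nat.cast_ne_zero.2 (Nat.ne_of_gt (Nat.pos_of_mem_divisors hr))
    rw [hfilter, Fintype.card_piFinset, prod_const, card_univ, Fintype.card_fin, eq_div_iff
      (pow_ne_zero 2 hr0)]
    push_cast
    rw [← mul_pow]
    exact_mod_cast congr_arg (· ^ 2) (ZMod.card_filter_dvd_val_mul hrn)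
  rw [Nat.card_congr (Equiv.subtypeEquivRight hcop), Nat.card_eq_fintype_card,
    Fintype.card_subtype,
    card_filter_eq_one_eq_sum_moebius _ g (NeZero.ne n) fun v _ => Nat.gcd_dvd_right _ _,
    mul_sum]
  refine sum_congr rfl fun r hr => ?_
  rw [hcount r hr]
  ring

theorem ZMod.card_SL2 (n : ℕ) [NeZero n] :
    (Nat.card SL(2, ZMod n) : ℚ) = n ^ 3 * ∑ r ∈ n.divisors, (μ r : ℚ) / r ^ 2 := by
  rw [SpecialLinearGroup.card_eq_card_isCoprime_mul_card, Nat.cast_mul, ZMod.card_isCoprime,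
    Nat.card_zmod]
  ring

namespace MonoidHom

variable {G K : Type*} [Group G] [Group K]

theorem index_eqLocus_comp_fst_comp_snd {f : G →* K} (hf : Function.Surjective f) [Finite K] :
    (eqLocus (f.comp (fst G G)) (f.comp (snd G G))).index = Nat.card K := by
  have hdiag : Nat.card (eqLocus (fst K K) (snd K K)) = Nat.card K := Nat.card_congr
    { toFun := fun x => x.1.1
      invFun := fun k => ⟨(k, k), rfl⟩
      left_inv := fun x => Subtype.ext (Prod.ext rfl x.2)
      right_inv := fun _ => rfl }
  have hcard := (eqLocus (fst K K) (snd K K)).index_mul_card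
  rw [hdiag, Nat.card_prod] at hcard
  change ((eqLocus (fst K K) (snd K K)).comap (f.prodMap f)).index = _
  rw [Subgroup.index_comap_of_surjective _ (hf.prodMap hf)]
  exact Nat.eq_of_mul_eq_mul_right Nat.card_pos hcard

theorem eqLocus_comp_fst_comp_snd_sup_prod (f : G →* K) (N : Subgroup G) [(N.map f).Normal] :
    eqLocus (f.comp (fst G G)) (f.comp (snd G G)) ⊔ N.prod N =
      eqLocus (((QuotientGroup.mk' (N.map f)).comp f).comp (fst G G))
        (((QuotientGroup.mk' (N.map f)).comp f).comp (snd G G)) := by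
  apply le_antisymm
  · refine sup_le (fun x hx => congr_arg QuotientGroup.mk hx) fun x hx => ?_
    obtain ⟨h1, h2⟩ := Subgroup.mem_prod.1 hx
    show (f x.1 : K ⧸ N.map f) = f x.2
    rw [(QuotientGroup.eq_one_iff _).2 (Subgroup.mem_map_of_mem f h1),
      (QuotientGroup.eq_one_iff _).2 (Subgroup.mem_map_of_mem f h2)]
  · intro x hx
    obtain ⟨c, hc, hfc⟩ := QuotientGroup.eq.1 hx
    have hx : x = (x.1 * c, x.2) * (c⁻¹, 1) := by simp
    rw [hx]
    refine mul_mem (Subgroup.mem_sup_left ?_)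
      (Subgroup.mem_sup_right (Subgroup.mem_prod.2 ⟨inv_mem hc, one_mem _⟩))
    show f (x.1 * c) = f x.2
    rw [map_mul, hfc]
    exact mul_inv_cancel_left _ _

theorem index_eqLocus_comp_fst_comp_snd_sup_prod {f : G →* K} (hf : Function.Surjective f)
    [Finite K] (N : Subgroup G) [hN : N.Normal] :
    (eqLocus (f.comp (fst G G)) (f.comp (snd G G)) ⊔ N.prod N).index = (N.map f).index := by
  have : (N.map f).Normal := hN.map f hf
  rw [eqLocus_comp_fst_comp_snd_sup_prod,
    index_eqLocus_comp_fst_comp_snd (f := (QuotientGroup.mk' (N.map f)).comp f)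
      ((QuotientGroup.mk'_surjective _).comp hf)]
  rfl

end MonoidHom

open Subgroup in
instance zpowers_negOneSL_normal : (zpowers negOneSL).Normal where
  conj_mem a ha g := by
    obtain ⟨k, rfl⟩ := mem_zpowers_iff.1 ha
    rw [((show Commute g negOneSL from negOneSL_commute g).zpow_right k).eq, mul_inv_cancel_right]
    exact zpow_mem (mem_zpowers _) k

theorem signSubgroup_eq_prod :
    signSubgroup = (Subgroup.zpowers negOneSL).prod (Subgroup.zpowers negOneSL) := by
  apply le_antisymm
  · rw [signSubgroup, Subgroup.closure_le]
    rintro x (rfl | rfl)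
    exacts [⟨Subgroup.mem_zpowers _, one_mem _⟩, ⟨one_mem _, Subgroup.mem_zpowers _⟩]
  · rintro ⟨a, b⟩ ⟨⟨j, rfl⟩, ⟨k, rfl⟩⟩
    have hprod : ((negOneSL ^ j, negOneSL ^ k) : SL(2, ℤ) × SL(2, ℤ)) =
        (negOneSL, 1) ^ j * (1, negOneSL) ^ k := by simp
    rw [hprod]
    exact mul_mem (zpow_mem (Subgroup.subset_closure (by simp)) j)
      (zpow_mem (Subgroup.subset_closure (by simp)) k)

lemma redSL_negOneSL (n : ℕ) : redSL n negOneSL = -1 := by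
  change redSL n (-1) = -1
  ext i j
  simp [redSL, SpecialLinearGroup.coe_neg]

theorem index_map_congSubgroup_mul_orderOf (n : ℕ) [NeZero n] :
    (Subgroup.map (QuotientGroup.mk' signSubgroup) (congSubgroup n)).index *
      orderOf (-1 : SL(2, ZMod n)) = Nat.card SL(2, ZMod n) := by
  rw [Subgroup.index_map, QuotientGroup.ker_mk', QuotientGroup.range_mk', Subgroup.index_top,
    mul_one, signSubgroup_eq_prod, congSubgroup,
    MonoidHom.index_eqLocus_comp_fst_comp_snd_sup_prod (redSL_surjective n),
    MonoidHom.map_zpowers, redSL_negOneSL, ← Nat.card_zpowers, Subgroup.index_mul_card]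

/-- Let `d ≥ 2`, let `G = SL₂(ℤ) × SL₂(ℤ)`, `H ≤ G` the subgroup of pairs congruent mod `d`,
`Z ≤ G` the subgroup generated by `(-I, I)` and `(I, -I)`, and `H̄` the image of `H` in `G/Z`.
Then `[G/Z : H̄] = 6` if `d = 2`, and `[G/Z : H̄] = (1/2)·d³·∑_{r ∣ d} μ(r)/r²` if `d > 2`. -/
theorem index_image_congSubgroup (d : ℕ) (hd : 2 ≤ d) :
    ((Subgroup.map (QuotientGroup.mk' signSubgroup) (congSubgroup d)).index : ℚ)
      = if d = 2 then 6
        else (1 / 2 : ℚ) * (d : ℚ) ^ 3 *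
            ∑ r ∈ d.divisors, (ArithmeticFunction.moebius r : ℚ) / (r : ℚ) ^ 2 := by
  have : NeZero d := ⟨by omega⟩
  have key := congr_arg (Nat.cast : ℕ → ℚ) (index_map_congSubgroup_mul_orderOf d)
  rw [ZMod.card_SL2, Nat.cast_mul] at key
  rcases hd.eq_or_lt with rfl | h2
  · have h1 : (-1 : SL(2, ZMod 2)) = 1 := by
      ext i j
      fin_cases i <;> fin_cases j <;> simp
    rw [h1, orderOf_one, Nat.prime_two.divisors, sum_pair (by norm_num),
      moebius_apply_one, moebius_apply_prime Nat.prime_two] at key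
    rw [if_pos rfl]
    linear_combination key
  · have : Fact (2 < d) := ⟨h2⟩
    have hord : orderOf (-1 : SL(2, ZMod d)) = 2 := by
      refine orderOf_eq_prime (by simp) fun h => ZMod.neg_one_ne_one (n := d) ?_
      simpa using congr_arg (fun A : SL(2, ZMod d) => A 0 0) h
    rw [hord] at key
    rw [if_neg h2.ne']
    linear_combination key / 2
end

section
/- Let p be an odd prime and D an integer, and let R be the quotient ring (ℤ/pℤ)[x]/(x² − D). Then the image of SL₂(ℤ/pℤ) in SL₂(R), under the group homomorphism induced by the canonical ring homomorphism ℤ/pℤ → R, has index p³ − (D/p)·p, where (D/p) denotes the Legendre symbol. -/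
/-!
Since `ℤ/p → R` is injective, the index is `|SL₂(R)| / |SL₂(𝔽_p)|`, and `|SL₂(𝔽_q)| = q³ − q`
because `det : GL₂ → 𝔽_q^×` is surjective. Write `ε` for the class of `x`.
* If `p ∣ D`, then `ε² = 0`; reduction `ε ↦ 0` is split by `𝔽_p → R` and its kernel `ε𝔽_p` squares
  to zero, so the kernel on `SL₂` is `{1 + N : N ∈ M₂(ε𝔽_p), tr N = 0}` of size `p³`.
* If `D ≡ e² ≠ 0`, then `R ≅ 𝔽_p × 𝔽_p` via `ε ↦ (e, −e)`, so `|SL₂(R)| = |SL₂(𝔽_p)|²`.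
* Otherwise `R = 𝔽_{p²}` and `|SL₂(R)| = p⁶ − p² = (p³ − p)(p³ + p)`.
The same argument works for `F[x]/(x² − d)` over any finite field `F` of odd characteristic, with
the quadratic character of `F` in place of the Legendre symbol.
-/

open Polynomial Matrix

@[to_additive AddMonoidHom.card_ker_mul_card_of_surjective]
theorem MonoidHom.card_ker_mul_card_of_surjective {G H : Type*} [Group G] [Group H] (f : G →* H)
    (hf : Function.Surjective f) : Nat.card f.ker * Nat.card H = Nat.card G := by
  rw [← f.ker.card_mul_index, Subgroup.index_ker, f.range_eq_top.2 hf, Subgroup.card_top]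

namespace Matrix.SpecialLinearGroup

variable {n : Type*} [DecidableEq n] [Fintype n] {R S : Type*} [CommRing R] [CommRing S]

theorem card_mul_card_units [Nonempty n] :
    Nat.card (SpecialLinearGroup n R) * Nat.card Rˣ = Nat.card (GL n R) := by
  have hrange : toGL.range = (GeneralLinearGroup.det (n := n) (R := R)).ker :=
    SetLike.coe_injective range_toGL
  rw [← GeneralLinearGroup.det.card_ker_mul_card_of_surjective GeneralLinearGroup.det_surjective,
    ← hrange, Nat.card_congr (MonoidHom.ofInjective toGL_injective).toEquiv]

theorem card_fin_two_field (F : Type*) [Field F] [Fintype F] :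
    (Nat.card (SpecialLinearGroup (Fin 2) F) : ℤ) = (Fintype.card F : ℤ) ^ 3 - Fintype.card F := by
  classical
  have hGL := card_mul_card_units (n := Fin 2) (R := F)
  rw [card_GL_field, Fin.prod_univ_two, Nat.card_eq_fintype_card (α := Fˣ), Fintype.card_units]
    at hGL
  set q := Fintype.card F
  have hq : 1 < q := Fintype.one_lt_card
  have hq1 : ((q - 1 : ℕ) : ℤ) ≠ 0 := by omega
  have hq2 : q ≤ q ^ 2 := Nat.le_self_pow two_ne_zero q
  apply mul_right_cancel₀ hq1
  rw [← Nat.cast_mul, hGL]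
  push_cast [Fin.val_zero, Fin.val_one, pow_zero, pow_one, hq.le, hq2,
    Nat.one_le_pow 2 q (by omega)]
  ring

theorem map_injective {f : R →+* S} (hf : Function.Injective f) :
    Function.Injective (map (n := n) f) := fun _ _ h ↦
  ext _ _ fun i j ↦ hf (congr_fun₂ (congrArg Subtype.val h) i j)

theorem map_surjective_of_rightInverse {f : R →+* S} {g : S →+* R}
    (hfg : Function.RightInverse g f) : Function.Surjective (map (n := n) f) := fun M ↦
  ⟨map g M, ext _ _ fun i j ↦ hfg (M i j)⟩

theorem index_range_map_mul_card {f : R →+* S} (hf : Function.Injective f) :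
    (map (n := n) f).range.index * Nat.card (SpecialLinearGroup n R) =
      Nat.card (SpecialLinearGroup n S) := by
  rw [mul_comm, Nat.card_congr (MonoidHom.ofInjective (map_injective (n := n) hf)).toEquiv,
    Subgroup.card_mul_index]

noncomputable def mapEquiv (e : R ≃+* S) : SpecialLinearGroup n R ≃* SpecialLinearGroup n S :=
  MulEquiv.ofBijective (map (e : R →+* S))
    ⟨map_injective e.injective, map_surjective_of_rightInverse (g := e.symm) e.apply_symm_apply⟩

noncomputable def prodEquiv :
    SpecialLinearGroup n (R × S) ≃* SpecialLinearGroup n R × SpecialLinearGroup n S := by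
  refine MulEquiv.ofBijective ((map (RingHom.fst R S)).prod (map (RingHom.snd R S))) ⟨?_, ?_⟩
  · intro A B h
    simp only [MonoidHom.prod_apply, Prod.mk.injEq] at h
    exact ext _ _ fun i j ↦ Prod.ext (congr_fun₂ (congrArg Subtype.val h.1) i j)
      (congr_fun₂ (congrArg Subtype.val h.2) i j)
  · rintro ⟨A, B⟩
    let M : Matrix n n (R × S) := of fun i j ↦ (A i j, B i j)
    have hdet : M.det = 1 :=
      Prod.ext (((RingHom.fst R S).map_det M).trans A.2) (((RingHom.snd R S).map_det M).trans B.2)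
    exact ⟨⟨M, hdet⟩, rfl⟩

theorem mem_ker_map_fin_two_iff (f : R →+* S) (M : SpecialLinearGroup (Fin 2) R) :
    M ∈ (map f).ker ↔
      M 0 0 - 1 ∈ RingHom.ker f ∧ M 0 1 ∈ RingHom.ker f ∧ M 1 0 ∈ RingHom.ker f ∧
        M 1 1 - 1 ∈ RingHom.ker f := by
  simp [SpecialLinearGroup.ext_iff, Fin.forall_fin_two, Matrix.one_apply, sub_eq_zero, and_assoc]

/-- With `I = ker f`, `det (1 + N) = 1 + tr N + det N = 1 + tr N` for `N ∈ M₂(I)` as `I² = 0`,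
so the kernel consists of the `1 + N` with `N` traceless, parametrized by `N 0 0, N 0 1, N 1 0`. -/
theorem card_ker_map_fin_two_of_ker_sq_eq_bot (f : R →+* S) (hf : RingHom.ker f ^ 2 = ⊥) :
    Nat.card (map (n := Fin 2) f).ker = Nat.card (RingHom.ker f) ^ 3 := by
  set I := RingHom.ker f
  have hmul : ∀ x ∈ I, ∀ y ∈ I, x * y = 0 := fun x hx y hy ↦ by
    simpa [← pow_two, hf] using Ideal.mul_mem_mul hx hy
  let e : (map (n := Fin 2) f).ker ≃ I × I × I :=
    { toFun := fun M ↦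
        have hM := (mem_ker_map_fin_two_iff f M).1 M.2
        (⟨M.1 0 0 - 1, hM.1⟩, ⟨M.1 0 1, hM.2.1⟩, ⟨M.1 1 0, hM.2.2.1⟩)
      invFun := fun ⟨x, y, z⟩ ↦ by
        refine ⟨⟨!![1 + x, y; z, 1 - x], ?_⟩, (mem_ker_map_fin_two_iff f _).2 ?_⟩
        · rw [det_fin_two_of]
          linear_combination -(hmul x x.2 x x.2) - hmul y y.2 z z.2
        · simp [x.2, y.2, z.2, I]
      left_inv := fun M ↦ by
        obtain ⟨ha, hb, hc, hd⟩ := (mem_ker_map_fin_two_iff f M).1 M.2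
        have hdet := M.1.2
        rw [det_fin_two] at hdet
        refine Subtype.ext (ext _ _ fun i j ↦ ?_)
        fin_cases i <;> fin_cases j
        all_goals simp
        linear_combination hmul _ ha _ hd - hmul _ hb _ hc - hdet
      right_inv := fun ⟨x, y, z⟩ ↦ by simp }
  rw [Nat.card_congr e, Nat.card_prod, Nat.card_prod]
  ring

theorem card_fin_two_of_ker_sq_eq_bot {f : R →+* S} {g : S →+* R}
    (hfg : Function.RightInverse g f) (hf : RingHom.ker f ^ 2 = ⊥) :
    Nat.card (SpecialLinearGroup (Fin 2) R) =
      Nat.card (RingHom.ker f) ^ 3 * Nat.card (SpecialLinearGroup (Fin 2) S) := by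
  rw [← card_ker_map_fin_two_of_ker_sq_eq_bot f hf,
    (map f).card_ker_mul_card_of_surjective (map_surjective_of_rightInverse hfg)]

end Matrix.SpecialLinearGroup

namespace AdjoinRoot

variable {K : Type*} [Field K]

instance (d : K) : Module.Finite K (AdjoinRoot (X ^ 2 - C d)) :=
  (powerBasis' (monic_X_pow_sub_C d two_ne_zero)).finite

theorem finrank_X_sq_sub_C (d : K) : Module.finrank K (AdjoinRoot (X ^ 2 - C d)) = 2 := by
  rw [(powerBasis' (monic_X_pow_sub_C d two_ne_zero)).finrank, powerBasis'_dim,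
    natDegree_X_pow_sub_C]

theorem natCard_X_sq_sub_C [Finite K] (d : K) :
    Nat.card (AdjoinRoot (X ^ 2 - C d)) = Nat.card K ^ 2 := by
  rw [Module.natCard_eq_pow_finrank (K := K), finrank_X_sq_sub_C]

theorem ker_lift_X_sq :
    RingHom.ker (lift (RingHom.id K) 0 (by simp) : AdjoinRoot (X ^ 2 : K[X]) →+* K) =
      Ideal.span {root _} := by
  ext x
  rw [RingHom.mem_ker, Ideal.mem_span_singleton]
  constructor
  · induction x using AdjoinRoot.induction_on with
    | ih g =>
      intro hg
      rw [lift_mk, eval₂_id, ← coeff_zero_eq_eval_zero, ← X_dvd_iff] at hg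
      obtain ⟨h, rfl⟩ := hg
      exact ⟨mk _ h, by rw [map_mul, mk_X]⟩
  · rintro ⟨y, rfl⟩
    rw [map_mul, lift_root, zero_mul]

theorem ker_lift_X_sq_sq_eq_bot :
    RingHom.ker (lift (RingHom.id K) 0 (by simp) : AdjoinRoot (X ^ 2 : K[X]) →+* K) ^ 2 = ⊥ := by
  rw [ker_lift_X_sq, Ideal.span_singleton_pow, Ideal.span_singleton_eq_bot, ← mk_X, ← map_pow,
    mk_self]

theorem natCard_ker_lift_X_sq [Finite K] :
    Nat.card (RingHom.ker (lift (RingHom.id K) 0 (by simp) : AdjoinRoot (X ^ 2 : K[X]) →+* K)) =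
      Nat.card K := by
  set π : AdjoinRoot (X ^ 2 : K[X]) →+* K := lift (RingHom.id K) 0 (by simp)
  have hπ : Function.Surjective π := fun a ↦ ⟨of _ a, lift_of _⟩
  have hcard := π.toAddMonoidHom.card_ker_mul_card_of_surjective hπ
  have hR := natCard_X_sq_sub_C (0 : K)
  rw [map_zero, sub_zero] at hR
  rw [hR] at hcard
  exact Nat.eq_of_mul_eq_mul_right Nat.card_pos (hcard.trans (sq _))

theorem natCard_SL_two_X_sq [Finite K] :
    Nat.card (SpecialLinearGroup (Fin 2) (AdjoinRoot (X ^ 2 : K[X]))) =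
      Nat.card K ^ 3 * Nat.card (SpecialLinearGroup (Fin 2) K) := by
  rw [SpecialLinearGroup.card_fin_two_of_ker_sq_eq_bot (g := of _) (fun _ ↦ lift_of _)
    ker_lift_X_sq_sq_eq_bot, natCard_ker_lift_X_sq]

noncomputable def algEquivProdOfSq (h2 : (2 : K) ≠ 0) {e : K} (he : e ≠ 0) :
    AdjoinRoot (X ^ 2 - C (e ^ 2)) ≃ₐ[K] K × K := by
  let ψ := (liftAlgHom (X ^ 2 - C (e ^ 2)) (Algebra.ofId K K) e (by simp)).prod
    (liftAlgHom (X ^ 2 - C (e ^ 2)) (Algebra.ofId K K) (-e) (by simp))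
  have hsurj : Function.Surjective ψ := fun ⟨a, b⟩ ↦ by
    refine ⟨of _ ((a + b) / 2) + root _ * of _ ((a - b) / (2 * e)), ?_⟩
    simp only [ψ, AlgHom.prod_apply, map_add, map_mul, liftAlgHom_of, liftAlgHom_root,
      Algebra.ofId_apply, Algebra.algebraMap_self, RingHom.id_apply]
    refine Prod.ext ?_ ?_ <;> simp only [Prod.fst_add, Prod.snd_add, Prod.fst_mul, Prod.snd_mul] <;>
      field_simp <;> ring
  have hinj : Function.Injective ψ :=
    (LinearMap.injective_iff_surjective_of_finrank_eq_finrank (f := ψ.toLinearMap)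
      (by rw [finrank_X_sq_sub_C, Module.finrank_prod, Module.finrank_self])).2 hsurj
  exact AlgEquiv.ofBijective ψ ⟨hinj, hsurj⟩

theorem natCard_SL_two_X_sq_sub_C_sq (h2 : (2 : K) ≠ 0) {e : K} (he : e ≠ 0) :
    Nat.card (SpecialLinearGroup (Fin 2) (AdjoinRoot (X ^ 2 - C (e ^ 2)))) =
      Nat.card (SpecialLinearGroup (Fin 2) K) ^ 2 := by
  rw [Nat.card_congr (SpecialLinearGroup.mapEquiv (algEquivProdOfSq h2 he).toRingEquiv).toEquiv,
    Nat.card_congr SpecialLinearGroup.prodEquiv.toEquiv, Nat.card_prod, sq]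

theorem natCard_SL_two_X_sq_sub_C_of_not_isSquare [Fintype K] {d : K} (hd : ¬IsSquare d) :
    (Nat.card (SpecialLinearGroup (Fin 2) (AdjoinRoot (X ^ 2 - C d))) : ℤ) =
      (Fintype.card K : ℤ) ^ 6 - Fintype.card K ^ 2 := by
  have : Fact (Irreducible (X ^ 2 - C d)) :=
    ⟨X_pow_sub_C_irreducible_of_prime Nat.prime_two fun b hb ↦ hd ⟨b, by rw [← hb, sq]⟩⟩
  have : Finite (AdjoinRoot (X ^ 2 - C d)) := Module.finite_of_finite K
  have : Fintype (AdjoinRoot (X ^ 2 - C d)) := Fintype.ofFinite _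
  rw [SpecialLinearGroup.card_fin_two_field, Fintype.card_eq_nat_card, natCard_X_sq_sub_C,
    Nat.card_eq_fintype_card]
  push_cast
  ring

variable [Fintype K] [DecidableEq K]

theorem natCard_SL_two_X_sq_sub_C (hK : ringChar K ≠ 2) (d : K) :
    (Nat.card (SpecialLinearGroup (Fin 2) (AdjoinRoot (X ^ 2 - C d))) : ℤ) =
      ((Fintype.card K : ℤ) ^ 3 - quadraticChar K d * Fintype.card K) *
        ((Fintype.card K : ℤ) ^ 3 - Fintype.card K) := by
  rcases eq_or_ne d 0 with rfl | hd0
  · rw [map_zero, sub_zero, natCard_SL_two_X_sq, quadraticChar_zero, Nat.card_eq_fintype_card]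
    push_cast
    rw [SpecialLinearGroup.card_fin_two_field]
    ring
  by_cases hsq : IsSquare d
  · obtain ⟨e, rfl⟩ := hsq
    have he : e ≠ 0 := by rintro rfl; simp at hd0
    rw [← sq, natCard_SL_two_X_sq_sub_C_sq (Ring.two_ne_zero hK) he, quadraticChar_sq_one' he]
    push_cast
    rw [SpecialLinearGroup.card_fin_two_field]
    ring
  · rw [natCard_SL_two_X_sq_sub_C_of_not_isSquare hsq,
      quadraticChar_neg_one_iff_not_isSquare.2 hsq]
    ring

theorem index_range_map_of_X_sq_sub_C (hK : ringChar K ≠ 2) (d : K) :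
    ((SpecialLinearGroup.map (n := Fin 2) (of (X ^ 2 - C d))).range.index : ℤ) =
      (Fintype.card K : ℤ) ^ 3 - quadraticChar K d * Fintype.card K := by
  have hinj : Function.Injective (of (X ^ 2 - C d)) :=
    of.injective_of_degree_ne_zero (by rw [degree_X_pow_sub_C two_pos]; norm_num)
  have hSL : (Fintype.card K : ℤ) ^ 3 - Fintype.card K ≠ 0 := by
    rw [← SpecialLinearGroup.card_fin_two_field]
    exact_mod_cast Nat.card_pos.ne'
  apply mul_right_cancel₀ hSL
  rw [← natCard_SL_two_X_sq_sub_C hK, ← SpecialLinearGroup.card_fin_two_field, ← Nat.cast_mul,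
    SpecialLinearGroup.index_range_map_mul_card hinj]

end AdjoinRoot

/-- Let `p` be an odd prime and `D` an integer, and let `R = (ℤ/pℤ)[x]/(x² − D)`.  Then the
image of `SL₂(ℤ/pℤ)` in `SL₂(R)`, under the group homomorphism induced by the canonical ring
homomorphism `ℤ/pℤ → R`, has index `p³ − (D/p)·p`, where `(D/p)` is the Legendre symbol. -/
theorem index_range_SL2_quadratic (p : ℕ) [Fact p.Prime] (hodd : Odd p) (D : ℤ) :
    ((Matrix.SpecialLinearGroup.map (n := Fin 2)
        (AdjoinRoot.of (X ^ 2 - C (D : ZMod p)))).range.index : ℤ)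
      = (p : ℤ) ^ 3 - legendreSym p D * p := by
  have hp : ringChar (ZMod p) ≠ 2 := by
    rw [ZMod.ringChar_zmod_n]
    rintro rfl
    exact Nat.not_odd_iff_even.2 even_two hodd
  rw [AdjoinRoot.index_range_map_of_X_sq_sub_C hp, ZMod.card, legendreSym]
end

section
/- Let p be a prime number and F a finite field with |F| = p. Under the group homomorphism SL₂(F) → SL₂(F[ε]) induced by the canonical inclusion of F into the ring of dual numbers F[ε] = F[x]/(x²), the image of SL₂(F) has index p³ in SL₂(F[ε]). -/
/-!
Reduction `ε ↦ 0` is a retraction of `F[ε] → F`, so `SL₂(F)` embeds in `SL₂(F[ε])` as a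
complement of the congruence kernel, and the index is the order of that kernel. The kernel
consists of the matrices `1 + εM`; since `ε² = 0`, `det (1 + εM) = 1 + ε tr M`, so it is in
bijection with the trace-zero matrices over `F`, of which there are `p ^ 4 / p = p ^ 3`.
-/

open Polynomial

theorem MonoidHom.index_range_eq_card_ker_of_leftInverse {G H : Type*} [Group G] [Group H]
    {f : G →* H} {s : H →* G} (hs : Function.LeftInverse f s) :
    s.range.index = Nat.card f.ker := by
  refine (Subgroup.isComplement'_of_disjoint_and_mul_eq_univ ?_ ?_).index_eq_card
  · rw [Subgroup.disjoint_def]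
    rintro _ hker ⟨h, rfl⟩
    rw [MonoidHom.mem_ker, hs h] at hker
    rw [hker, map_one]
  · refine Set.eq_univ_of_forall fun g =>
      ⟨g * (s (f g))⁻¹, ?_, s (f g), ⟨f g, rfl⟩, inv_mul_cancel_right g _⟩
    simp [MonoidHom.mem_ker, hs (f g)]

namespace Matrix

lemma card_traceKer_mul_card {R n : Type*} [AddCommGroup R] [Finite R] [Fintype n]
    [Nonempty n] :
    Nat.card (traceAddMonoidHom n R).ker * Nat.card R = Nat.card R ^ (Nat.card n ^ 2) := by
  have h := (traceAddMonoidHom n R).ker.card_mul_index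
  rw [AddSubgroup.index_ker, AddMonoidHom.range_eq_top.2 trace_surjective,
    AddSubgroup.card_top] at h
  rw [h, Matrix, Nat.card_fun, Nat.card_fun, ← pow_mul, sq]

namespace SpecialLinearGroup

variable {n R S : Type*} [Fintype n] [DecidableEq n] [CommRing R] [CommRing S]

lemma mem_ker_map_iff {f : R →+* S} {A : SpecialLinearGroup n R} :
    A ∈ (map f).ker ↔ (A : Matrix n n R).map f = 1 := by
  rw [MonoidHom.mem_ker, SpecialLinearGroup.ext_iff, ← Matrix.ext_iff]
  simp [Matrix.one_apply]

lemma leftInverse_map {f : R →+* S} {g : S →+* R} (h : Function.LeftInverse g f) :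
    Function.LeftInverse (map (n := n) g) (map f) := fun A => by
  ext i j
  simp [h (A i j)]

end SpecialLinearGroup

end Matrix

namespace AdjoinRoot

variable {R : Type*} [CommRing R]

variable (R) in
noncomputable def dualReduce : AdjoinRoot (X ^ 2 : R[X]) →+* R :=
  lift (RingHom.id R) 0 (by simp)

@[simp] lemma dualReduce_of (a : R) : dualReduce R (of _ a) = a := lift_of _

@[simp] lemma dualReduce_root : dualReduce R (root _) = 0 := lift_root _

lemma root_X_sq_sq_eq_zero : root (X ^ 2 : R[X]) ^ 2 = 0 := by
  rw [← mk_X, ← map_pow, mk_self]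

lemma of_mul_root_X_sq_eq_zero_iff {a : R} : of (X ^ 2 : R[X]) a * root _ = 0 ↔ a = 0 := by
  rw [← mk_C, ← mk_X, ← map_mul, mk_eq_zero, X_pow_dvd_iff]
  constructor
  · intro h
    simpa using h 1 one_lt_two
  · rintro rfl d -
    simp

lemma exists_eq_of_dualReduce_add_of_mul_root (z : AdjoinRoot (X ^ 2 : R[X])) :
    ∃ b : R, z = of _ (dualReduce R z) + of _ b * root _ := by
  obtain ⟨f, rfl⟩ := mk_surjective z
  have hf := congrArg (mk (X ^ 2 : R[X])) (X_mul_divX_add f)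
  rw [← X_mul_divX_add f.divX] at hf
  simp only [map_add, map_mul, mk_X, mk_C, coeff_divX, zero_add] at hf
  refine ⟨f.coeff 1, ?_⟩
  rw [← hf]
  simp only [map_add, map_mul, dualReduce_root, zero_mul, dualReduce_of, zero_add]
  linear_combination (mk (X ^ 2 : R[X]) f.divX.divX) * root_X_sq_sq_eq_zero (R := R)

section

open Matrix

variable {n : Type*} [DecidableEq n]

noncomputable def oneAddRootSMul (M : Matrix n n R) : Matrix n n (AdjoinRoot (X ^ 2 : R[X])) :=
  1 + root (X ^ 2 : R[X]) • M.map (of (X ^ 2 : R[X]))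

lemma det_oneAddRootSMul [Fintype n] (M : Matrix n n R) :
    det (oneAddRootSMul M) = 1 + of _ (trace M) * root _ := by
  rw [oneAddRootSMul, det_one_add_smul, root_X_sq_sq_eq_zero, mul_zero, add_zero,
    ← AddMonoidHom.map_trace]

lemma map_dualReduce_oneAddRootSMul (M : Matrix n n R) :
    (oneAddRootSMul M).map (dualReduce R) = 1 := by
  ext i j
  simp [oneAddRootSMul, Matrix.one_apply]

lemma oneAddRootSMul_injective :
    Function.Injective
      (oneAddRootSMul : Matrix n n R → Matrix n n (AdjoinRoot (X ^ 2 : R[X]))) := by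
  intro M N h
  ext i j
  rw [oneAddRootSMul, oneAddRootSMul, add_right_inj] at h
  have hij := congrFun₂ h i j
  simp only [Matrix.smul_apply, map_apply, smul_eq_mul] at hij
  rw [← sub_eq_zero, ← of_mul_root_X_sq_eq_zero_iff, map_sub, sub_mul, mul_comm, hij, mul_comm,
    sub_self]

lemma exists_eq_oneAddRootSMul {A : Matrix n n (AdjoinRoot (X ^ 2 : R[X]))}
    (hA : A.map (dualReduce R) = 1) : ∃ M : Matrix n n R, A = oneAddRootSMul M := by
  choose M hM using fun i j => exists_eq_of_dualReduce_add_of_mul_root (A i j)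
  refine ⟨Matrix.of M, ?_⟩
  ext i j
  rw [hM i j, ← Matrix.map_apply (f := dualReduce R), hA]
  simp [oneAddRootSMul, Matrix.one_apply, mul_comm]

variable [Fintype n]

noncomputable def traceKerEquivKerMapDualReduce :
    (traceAddMonoidHom n R).ker ≃ (SpecialLinearGroup.map (n := n) (dualReduce R)).ker :=
  Equiv.ofBijective
    (fun M => ⟨⟨oneAddRootSMul M.1, by
      rw [det_oneAddRootSMul, show trace M.1 = 0 from M.2, map_zero, zero_mul, add_zero]⟩,
      SpecialLinearGroup.mem_ker_map_iff.2 (map_dualReduce_oneAddRootSMul M.1)⟩)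
    ⟨fun M N h => Subtype.ext <| oneAddRootSMul_injective <|
      congrArg (fun A : (SpecialLinearGroup.map (n := n) (dualReduce R)).ker => A.1.1) h,
    fun ⟨A, hA⟩ => by
      obtain ⟨M, hM⟩ := exists_eq_oneAddRootSMul (SpecialLinearGroup.mem_ker_map_iff.1 hA)
      have htrace : trace M = 0 := by
        have hdet := A.2
        rwa [hM, det_oneAddRootSMul, add_eq_left, of_mul_root_X_sq_eq_zero_iff] at hdet
      exact ⟨⟨M, htrace⟩, Subtype.ext (Subtype.ext hM.symm)⟩⟩

theorem index_range_map_of_mul_card [Finite R] [Nonempty n] :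
    (SpecialLinearGroup.map (n := n) (of (X ^ 2 : R[X]))).range.index * Nat.card R =
      Nat.card R ^ (Nat.card n ^ 2) := by
  rw [MonoidHom.index_range_eq_card_ker_of_leftInverse
      (SpecialLinearGroup.leftInverse_map dualReduce_of),
    ← Nat.card_congr traceKerEquivKerMapDualReduce, card_traceKer_mul_card]

end

end AdjoinRoot

theorem index_range_SL2_ramified_general (p : ℕ) (F : Type*) [Field F] [Fintype F]
    (hF : Fintype.card F = p) :
    (Matrix.SpecialLinearGroup.map (n := Fin 2)
        (AdjoinRoot.of (X ^ 2 : Polynomial F))).range.index = p ^ 3 := by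
  have h := AdjoinRoot.index_range_map_of_mul_card (R := F) (n := Fin 2)
  rw [Nat.card_eq_fintype_card, hF, Nat.card_fin] at h
  have hp : 0 < p := hF ▸ Fintype.card_pos
  exact Nat.eq_of_mul_eq_mul_right hp (by rw [h]; ring)

/-- Let `p` be a prime and `F` a finite field with `|F| = p`.  Under the group homomorphism
`SL₂(F) → SL₂(F[ε])` induced by the canonical inclusion of `F` into the ring of dual numbers
`F[ε] = F[x]/(x²)`, the image of `SL₂(F)` has index `p³`. -/
theorem index_range_SL2_ramified (p : ℕ) (hp : p.Prime) (F : Type*) [Field F] [Fintype F]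
    (hF : Fintype.card F = p) :
    (Matrix.SpecialLinearGroup.map (n := Fin 2)
        (AdjoinRoot.of (X ^ 2 : Polynomial F))).range.index = p ^ 3 :=
  index_range_SL2_ramified_general p F hF
end

section
/- Let p, q, r be positive integers with gcd(p, q, r) = 1. Set g₁ = gcd(p,q), g₂ = gcd(p,r), m₁ = p/g₁, m₂ = p/g₂, and m = p/(g₁·g₂) (note that g₁·g₂ divides p since g₁ and g₂ are coprime). The assignment (α, β) ↦ q·α + r·β defines a well-defined additive group homomorphism f : ℤ/m₁ℤ × ℤ/m₂ℤ → ℤ/pℤ. Then f is surjective, and its kernel is a cyclic group of order m, generated by the class of (g₂, −q·s), where s is any integer satisfying (r/g₂)·s ≡ 1 (mod m₂). -/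
/-- Let `p, q, r` be positive integers with `gcd(p,q,r) = 1`, and set `g₁ = gcd(p,q)`,
`g₂ = gcd(p,r)`, `m₁ = p/g₁`, `m₂ = p/g₂` and `m = p/(g₁·g₂)`.  The assignment
`(α, β) ↦ q·α + r·β` defines a well-defined additive homomorphism
`f : ℤ/m₁ℤ × ℤ/m₂ℤ → ℤ/pℤ`; moreover `f` is surjective and its kernel is a cyclic group of
order `m`, generated by the class of `(g₂, −q·s)` for any integer `s` with
`(r/g₂)·s ≡ 1 (mod m₂)`. -/
theorem kernel_cyclic (p q r : ℕ) (hp : 0 < p) (hq : 0 < q) (hr : 0 < r)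
    (hgcd : Nat.gcd p (Nat.gcd q r) = 1) :
    ∃ f : ZMod (p / Nat.gcd p q) × ZMod (p / Nat.gcd p r) →+ ZMod p,
      (∀ a b : ℤ,
          f ((a : ZMod (p / Nat.gcd p q)), (b : ZMod (p / Nat.gcd p r)))
            = (((q : ℤ) * a + (r : ℤ) * b : ℤ) : ZMod p)) ∧
      Function.Surjective f ∧
      ∀ s : ℤ, ((r / Nat.gcd p r : ℕ) : ℤ) * s ≡ 1 [ZMOD ((p / Nat.gcd p r : ℕ) : ℤ)] →
        f.ker = AddSubgroup.closure
            {(((Nat.gcd p r : ℕ) : ZMod (p / Nat.gcd p q)),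
              ((-((q : ℤ) * s) : ℤ) : ZMod (p / Nat.gcd p r)))} ∧
        Nat.card f.ker = p / (Nat.gcd p q * Nat.gcd p r) := by
  set g₁ := Nat.gcd p q with hg₁def
  set g₂ := Nat.gcd p r with hg₂def
  have hg₁pos : 0 < g₁ := Nat.gcd_pos_of_pos_left q hp
  have hg₂pos : 0 < g₂ := Nat.gcd_pos_of_pos_left r hp
  have hco : Nat.Coprime g₁ g₂ := by
    have h1 : Nat.gcd g₁ g₂ ∣ 1 := by
      rw [← hgcd]
      exact Nat.dvd_gcd ((Nat.gcd_dvd_left g₁ g₂).trans (Nat.gcd_dvd_left p q))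
        (Nat.dvd_gcd ((Nat.gcd_dvd_left g₁ g₂).trans (Nat.gcd_dvd_right p q))
          ((Nat.gcd_dvd_right g₁ g₂).trans (Nat.gcd_dvd_right p r)))
    exact Nat.eq_one_of_dvd_one h1
  obtain ⟨t, hpt⟩ : g₁ * g₂ ∣ p :=
    Nat.Coprime.mul_dvd_of_dvd_of_dvd hco (Nat.gcd_dvd_left p q) (Nat.gcd_dvd_left p r)
  obtain ⟨u, hqu⟩ : g₁ ∣ q := Nat.gcd_dvd_right p q
  obtain ⟨v, hrv⟩ : g₂ ∣ r := Nat.gcd_dvd_right p r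
  have ht : 0 < t := by
    rcases Nat.eq_zero_or_pos t with h | h
    · simp [h] at hpt; omega
    · exact h
  have hm₁ : p / g₁ = g₂ * t := by
    rw [hpt, mul_assoc, Nat.mul_div_cancel_left _ hg₁pos]
  have hm₂ : p / g₂ = g₁ * t := by
    rw [hpt, mul_comm g₁ g₂, mul_assoc, Nat.mul_div_cancel_left _ hg₂pos]
  -- casts
  have hpt' : (p : ℤ) = (g₁ : ℤ) * g₂ * t := by exact_mod_cast congrArg (Nat.cast : ℕ → ℤ) hpt
  have hqu' : (q : ℤ) = (g₁ : ℤ) * u := by exact_mod_cast congrArg (Nat.cast : ℕ → ℤ) hqu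
  have hrv' : (r : ℤ) = (g₂ : ℤ) * v := by exact_mod_cast congrArg (Nat.cast : ℕ → ℤ) hrv
  -- the two component maps
  have hcond₁ : ((Int.castAddHom (ZMod p)).comp (AddMonoidHom.mulLeft (q : ℤ)))
      ((p / g₁ : ℕ) : ℤ) = 0 := by
    simp only [AddMonoidHom.coe_comp, Function.comp_apply, AddMonoidHom.coe_mulLeft,
      Int.coe_castAddHom]
    rw [ZMod.intCast_zmod_eq_zero_iff_dvd]
    refine ⟨u, ?_⟩
    rw [hm₁]
    push_cast
    linear_combination ((g₂ : ℤ) * t) * hqu' - (u : ℤ) * hpt'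
  have hcond₂ : ((Int.castAddHom (ZMod p)).comp (AddMonoidHom.mulLeft (r : ℤ)))
      ((p / g₂ : ℕ) : ℤ) = 0 := by
    simp only [AddMonoidHom.coe_comp, Function.comp_apply, AddMonoidHom.coe_mulLeft,
      Int.coe_castAddHom]
    rw [ZMod.intCast_zmod_eq_zero_iff_dvd]
    refine ⟨v, ?_⟩
    rw [hm₂]
    push_cast
    linear_combination ((g₁ : ℤ) * t) * hrv' - (v : ℤ) * hpt'
  set f₁ : ZMod (p / g₁) →+ ZMod p :=
    ZMod.lift (p / g₁) ⟨(Int.castAddHom (ZMod p)).comp (AddMonoidHom.mulLeft (q : ℤ)), hcond₁⟩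
    with hf₁def
  set f₂ : ZMod (p / g₂) →+ ZMod p :=
    ZMod.lift (p / g₂) ⟨(Int.castAddHom (ZMod p)).comp (AddMonoidHom.mulLeft (r : ℤ)), hcond₂⟩
    with hf₂def
  set f : ZMod (p / g₁) × ZMod (p / g₂) →+ ZMod p :=
    f₁.comp (AddMonoidHom.fst _ _) + f₂.comp (AddMonoidHom.snd _ _) with hfdef
  have hf : ∀ a b : ℤ, f ((a : ZMod (p / g₁)), (b : ZMod (p / g₂)))
      = (((q : ℤ) * a + (r : ℤ) * b : ℤ) : ZMod p) := by
    intro a b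
    simp only [hfdef, hf₁def, hf₂def, AddMonoidHom.add_apply, AddMonoidHom.coe_comp,
      Function.comp_apply, AddMonoidHom.coe_fst, AddMonoidHom.coe_snd, ZMod.lift_coe,
      AddMonoidHom.coe_mulLeft, Int.coe_castAddHom]
    push_cast
    ring
  refine ⟨f, hf, ?_, ?_⟩
  · -- surjectivity
    intro x
    obtain ⟨x₀, rfl⟩ := ZMod.intCast_surjective x
    set A := Nat.gcdA p (Nat.gcd q r)
    set B := Nat.gcdB p (Nat.gcd q r)
    set C := Nat.gcdA q r
    set D := Nat.gcdB q r
    have h2 : (1 : ℤ) = p * A + (Nat.gcd q r : ℤ) * B := by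
      have := Nat.gcd_eq_gcd_ab p (Nat.gcd q r)
      rw [hgcd] at this
      exact_mod_cast this
    have h1 : (Nat.gcd q r : ℤ) = q * C + r * D := Nat.gcd_eq_gcd_ab q r
    refine ⟨((C * B * x₀ : ℤ), (D * B * x₀ : ℤ)), ?_⟩
    rw [hf]
    rw [ZMod.intCast_eq_intCast_iff_dvd_sub]
    exact ⟨A * x₀, by linear_combination x₀ * h2 + x₀ * B * h1⟩
  · -- kernel
    intro s hs
    haveI : NeZero (p / g₁) := ⟨by rw [hm₁]; positivity⟩
    haveI : NeZero (p / g₂) := ⟨by rw [hm₂]; positivity⟩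
    haveI : NeZero p := ⟨by omega⟩
    -- cardinality of the kernel
    have hcard : Nat.card f.ker = t := by
      have h3 : Nat.card (ZMod (p / g₁) × ZMod (p / g₂))
          = Nat.card ((ZMod (p / g₁) × ZMod (p / g₂)) ⧸ f.ker) * Nat.card f.ker :=
        AddSubgroup.card_eq_card_quotient_mul_card_addSubgroup f.ker
      have hsurj : Function.Surjective f := by
        -- reuse: re-derive surjectivity (copy)
        intro x
        obtain ⟨x₀, rfl⟩ := ZMod.intCast_surjective x
        set A := Nat.gcdA p (Nat.gcd q r)
        set B := Nat.gcdB p (Nat.gcd q r)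
        set C := Nat.gcdA q r
        set D := Nat.gcdB q r
        have h2 : (1 : ℤ) = p * A + (Nat.gcd q r : ℤ) * B := by
          have := Nat.gcd_eq_gcd_ab p (Nat.gcd q r)
          rw [hgcd] at this
          exact_mod_cast this
        have h1 : (Nat.gcd q r : ℤ) = q * C + r * D := Nat.gcd_eq_gcd_ab q r
        refine ⟨((C * B * x₀ : ℤ), (D * B * x₀ : ℤ)), ?_⟩
        rw [hf]
        rw [ZMod.intCast_eq_intCast_iff_dvd_sub]
        exact ⟨A * x₀, by linear_combination x₀ * h2 + x₀ * B * h1⟩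
      have h4 : Nat.card ((ZMod (p / g₁) × ZMod (p / g₂)) ⧸ f.ker) = Nat.card (ZMod p) :=
        Nat.card_congr (QuotientAddGroup.quotientKerEquivOfSurjective f hsurj).toEquiv
      rw [h4] at h3
      rw [Nat.card_prod, Nat.card_zmod, Nat.card_zmod, Nat.card_zmod] at h3
      have h6 : p / g₁ * (p / g₂) = p * t := by rw [hm₁, hm₂, hpt]; ring
      have : p * t = p * Nat.card f.ker := by rw [← h6]; exact h3
      exact (Nat.eq_of_mul_eq_mul_left hp this).symm
    have hdiv : p / (g₁ * g₂) = t := by rw [hpt, Nat.mul_div_cancel_left _ (by positivity)]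
    -- the generator
    set S : ZMod (p / g₂) := ((s : ℤ) : ZMod (p / g₂)) with hSdef
    have hvq : r / g₂ = v := by rw [hrv, Nat.mul_div_cancel_left _ hg₂pos]
    have hS : ((v : ℕ) : ZMod (p / g₂)) * S = 1 := by
      have := (ZMod.intCast_eq_intCast_iff _ _ _).mpr hs
      rw [hvq] at this
      push_cast at this ⊢
      exact this
    set x : ZMod (p / g₁) × ZMod (p / g₂) :=
      (((g₂ : ℕ) : ZMod (p / g₁)), ((-((q : ℤ) * s) : ℤ) : ZMod (p / g₂))) with hxdef
    have hx_ker : x ∈ f.ker := by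
      rw [AddMonoidHom.mem_ker]
      have : x = (((g₂ : ℤ) : ZMod (p / g₁)), ((-((q : ℤ) * s) : ℤ) : ZMod (p / g₂))) := by
        rw [hxdef]; push_cast; rfl
      rw [this, hf, ZMod.intCast_zmod_eq_zero_iff_dvd]
      obtain ⟨k, hk⟩ : ((p / g₂ : ℕ) : ℤ) ∣ (v : ℤ) * s - 1 := by
        rw [hvq] at hs
        exact Int.ModEq.dvd hs.symm
      rw [hm₂] at hk
      push_cast at hk
      refine ⟨-(q : ℤ) * k, ?_⟩
      linear_combination ((q : ℤ) * k) * hpt' + (-(q : ℤ) * s) * hrv'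
        + (-(q : ℤ) * (g₂ : ℤ)) * hk
    have hle : AddSubgroup.closure {x} ≤ f.ker := by
      rw [AddSubgroup.closure_le, Set.singleton_subset_iff]
      exact hx_ker
    -- order of x
    have hord₁ : addOrderOf (((g₂ : ℕ) : ZMod (p / g₁))) = t := by
      rw [ZMod.addOrderOf_coe g₂ (NeZero.ne (p / g₁)), hm₁]
      have : Nat.gcd (g₂ * t) g₂ = g₂ := by
        have := Nat.gcd_mul_left g₂ t 1
        simpa [mul_comm] using this
      rw [this, Nat.mul_div_cancel_left _ hg₂pos]
    have hord₂ : addOrderOf (((-((q : ℤ) * s) : ℤ) : ZMod (p / g₂))) = t := by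
      have he : ((-((q : ℤ) * s) : ℤ) : ZMod (p / g₂)) = -(((q : ℕ) : ZMod (p / g₂)) * S) := by
        push_cast; ring
      rw [he, addOrderOf_neg]
      have hS' : S * ((v : ℕ) : ZMod (p / g₂)) = 1 := by rw [mul_comm]; exact hS
      have hinj : Function.Injective (AddMonoidHom.mulRight S) := by
        intro a b h
        have h2 := congrArg (· * ((v : ℕ) : ZMod (p / g₂))) h
        simpa [AddMonoidHom.mulRight_apply, mul_assoc, hS'] using h2
      have h3 : ((q : ℕ) : ZMod (p / g₂)) * S
          = (AddMonoidHom.mulRight S) ((q : ℕ) : ZMod (p / g₂)) := rfl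
      rw [h3, addOrderOf_injective (AddMonoidHom.mulRight S) hinj]
      rw [ZMod.addOrderOf_coe q (NeZero.ne (p / g₂)), hm₂]
      have hg : Nat.gcd (g₁ * t) q = g₁ := by
        refine Nat.dvd_antisymm ?_ (Nat.dvd_gcd ⟨t, rfl⟩ ⟨u, hqu⟩)
        have h5 : Nat.gcd (g₁ * t) q ∣ p := (Nat.gcd_dvd_left _ _).trans ⟨g₂, by rw [hpt]; ring⟩
        exact Nat.dvd_gcd h5 (Nat.gcd_dvd_right _ _)
      rw [hg, Nat.mul_div_cancel_left _ hg₁pos]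
    have hordx : addOrderOf x = t := by
      rw [hxdef, Prod.addOrderOf_mk, hord₁, hord₂, Nat.lcm_self]
    have hcardcl : Nat.card (AddSubgroup.closure {x}) = t := by
      rw [← AddSubgroup.zmultiples_eq_closure, Nat.card_zmultiples, hordx]
    refine ⟨?_, by rw [hcard, hdiv]⟩
    exact (AddSubgroup.eq_of_le_of_card_ge hle (by rw [hcard, hcardcl])).symm
end

section
/- Let p, q, r be positive integers with gcd(p, q, r) = 1. Set g₁ = gcd(p,q), g₂ = gcd(p,r), and m = p/(g₁·g₂) (note g₁·g₂ divides p). Let s be an integer with (r/g₂)·s ≡ 1 (mod p/g₂), and set n = −(q/g₁)·s. Then for all nonzero complex numbers x₁, y₁, x₂, y₂, the three equalities x₁^{q/g₁}·y₁^{r/g₂} = x₂^{q/g₁}·y₂^{r/g₂}, x₁^{p/g₁} = x₂^{p/g₁}, and y₁^{p/g₂} = y₂^{p/g₂} all hold if and only if there exists an integer k such that x₂ = exp(2πi·k/m)·x₁ and y₂ = exp(2πi·k·n/m)·y₁. -/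
/-!
Put `x₂ = u * x₁` and `y₂ = v * y₁`. With `q = g₁ q'`, `r = g₂ r'` and `p = g₁ g₂ m`, the three
equations say `u ^ q' * v ^ r' = 1`, `u ^ (g₂ m) = 1` and `v ^ (g₁ m) = 1`, so `u = ζ ^ a` and
`v = ζ ^ b` for `ζ = exp (2πi / p)`, and the conditions become `p ∣ q' a + r' b`, `g₁ ∣ a`,
`g₂ ∣ b`. As `g₂` is prime to `q` and `g₁` to `r`, they force `g₁ g₂ ∣ a` and `g₁ g₂ ∣ b`, after
which `m ∣ q' (a / g₁ g₂) + r' (b / g₁ g₂)` solves, through `r' s ≡ 1 [ZMOD m]`, to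
`b / g₁ g₂ ≡ n (a / g₁ g₂) [ZMOD m]`: this is the orbit of `k = a / g₁ g₂`.
-/

open Complex Real

namespace Int

theorem exists_dvd_sub_of_dvd_add {g₁ g₂ m q r s a b : ℤ} (hg₁ : g₁ ≠ 0) (hg₂ : g₂ ≠ 0)
    (hq : IsCoprime g₂ (g₁ * q)) (hr : IsCoprime g₁ (g₂ * r)) (hs : r * s ≡ 1 [ZMOD m])
    (h : g₁ * g₂ * m ∣ a * q + b * r) (ha : g₁ ∣ a) (hb : g₂ ∣ b) :
    ∃ k, g₁ * g₂ * m ∣ a - k * (g₁ * g₂) ∧ g₁ * g₂ * m ∣ b - k * (-q * s) * (g₁ * g₂) := by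
  obtain ⟨a, rfl⟩ := ha
  obtain ⟨b, rfl⟩ := hb
  have hg₂a : g₂ ∣ g₁ * q * a := by
    have := (dvd_add_left ((dvd_mul_right g₂ b).mul_right r)).mp
      (((dvd_mul_left g₂ g₁).mul_right m).trans h)
    rwa [mul_right_comm] at this
  have hg₁b : g₁ ∣ g₂ * r * b := by
    have := (dvd_add_right ((dvd_mul_right g₁ a).mul_right q)).mp
      (((dvd_mul_right g₁ g₂).mul_right m).trans h)
    rwa [mul_right_comm] at this
  obtain ⟨α, rfl⟩ := hq.dvd_of_dvd_mul_left hg₂a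
  obtain ⟨β, rfl⟩ := hr.dvd_of_dvd_mul_left hg₁b
  obtain ⟨c, hc⟩ : m ∣ α * q + β * r := by
    obtain ⟨c, hc⟩ := h
    exact ⟨c, mul_left_cancel₀ (mul_ne_zero hg₁ hg₂) (by linear_combination hc)⟩
  obtain ⟨t, ht⟩ := hs.dvd
  refine ⟨α, ⟨0, by ring⟩, s * c + β * t, ?_⟩
  linear_combination g₁ * g₂ * (s * hc + β * ht)

theorem dvd_add_of_dvd_sub {g₁ g₂ m q r s a b k : ℤ} (hs : r * s ≡ 1 [ZMOD m])
    (ha : g₁ * g₂ * m ∣ a - k * (g₁ * g₂)) (hb : g₁ * g₂ * m ∣ b - k * (-q * s) * (g₁ * g₂)) :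
    g₁ * g₂ * m ∣ a * q + b * r ∧ g₁ ∣ a ∧ g₂ ∣ b := by
  obtain ⟨c, hc⟩ := ha
  obtain ⟨d, hd⟩ := hb
  obtain ⟨t, ht⟩ := hs.dvd
  refine ⟨⟨k * q * t + q * c + r * d, ?_⟩, ⟨k * g₂ + g₂ * m * c, ?_⟩,
    ⟨-k * q * s * g₁ + g₁ * m * d, ?_⟩⟩
  · linear_combination q * hc + r * hd + k * q * g₁ * g₂ * ht
  · linear_combination hc
  · linear_combination hd

end Int

namespace IsPrimitiveRoot

theorem zpow_eq_zpow_iff_dvd {G₀ : Type*} [CommGroupWithZero G₀] {ζ : G₀} {p : ℕ}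
    (hζ : IsPrimitiveRoot ζ p) (hp : p ≠ 0) (a b : ℤ) :
    ζ ^ a = ζ ^ b ↔ (p : ℤ) ∣ a - b := by
  rw [← hζ.zpow_eq_one_iff_dvd, zpow_sub₀ (hζ.ne_zero hp),
    div_eq_one_iff_eq (zpow_ne_zero _ (hζ.ne_zero hp))]

theorem zpow_pow_eq_one_iff_dvd {G : Type*} [DivisionCommMonoid G] {ζ : G} {d e : ℕ}
    (hζ : IsPrimitiveRoot ζ (d * e)) (he : e ≠ 0) (a : ℤ) :
    (ζ ^ a) ^ e = 1 ↔ (d : ℤ) ∣ a := by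
  rw [← zpow_natCast, ← zpow_mul, hζ.zpow_eq_one_iff_dvd, Nat.cast_mul]
  exact mul_dvd_mul_iff_right (Int.natCast_ne_zero.mpr he)

theorem zpow_fiber_iff {G₀ : Type*} [CommGroupWithZero G₀] {ζ : G₀} {g₁ g₂ m q r : ℕ}
    (hζ : IsPrimitiveRoot ζ (g₁ * g₂ * m)) (hg₁ : g₁ ≠ 0) (hg₂ : g₂ ≠ 0) (hm : m ≠ 0)
    (hq : Nat.Coprime g₂ (g₁ * q)) (hr : Nat.Coprime g₁ (g₂ * r)) {s : ℤ}
    (hs : r * s ≡ 1 [ZMOD m]) (a b : ℤ) :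
    ((ζ ^ a) ^ q * (ζ ^ b) ^ r = 1 ∧ (ζ ^ a) ^ (g₂ * m) = 1 ∧ (ζ ^ b) ^ (g₁ * m) = 1) ↔
      ∃ k : ℤ, ζ ^ a = ζ ^ (k * (g₁ * g₂ : ℕ)) ∧ ζ ^ b = ζ ^ (k * (-q * s) * (g₁ * g₂ : ℕ)) := by
  have hp : g₁ * g₂ * m ≠ 0 := by positivity
  have hζa : IsPrimitiveRoot ζ (g₁ * (g₂ * m)) := by rwa [← mul_assoc]
  have hζb : IsPrimitiveRoot ζ (g₂ * (g₁ * m)) := by rwa [mul_left_comm, ← mul_assoc]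
  rw [← zpow_natCast, ← zpow_natCast, ← zpow_mul, ← zpow_mul, ← zpow_add₀ (hζ.ne_zero hp),
    hζ.zpow_eq_one_iff_dvd, hζa.zpow_pow_eq_one_iff_dvd (by positivity),
    hζb.zpow_pow_eq_one_iff_dvd (by positivity)]
  simp only [hζ.zpow_eq_zpow_iff_dvd hp]
  push_cast
  exact ⟨fun ⟨h, ha, hb⟩ => Int.exists_dvd_sub_of_dvd_add (by positivity) (by positivity)
      (Nat.isCoprime_iff_coprime.mpr (by exact_mod_cast hq))
      (Nat.isCoprime_iff_coprime.mpr (by exact_mod_cast hr)) hs h ha hb,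
    fun ⟨_, ha, hb⟩ => Int.dvd_add_of_dvd_sub hs ha hb⟩

theorem fiber_iff {K : Type*} [Field K] {ζ : K} {g₁ g₂ m q r : ℕ}
    (hζ : IsPrimitiveRoot ζ (g₁ * g₂ * m)) (hg₁ : g₁ ≠ 0) (hg₂ : g₂ ≠ 0) (hm : m ≠ 0)
    (hq : Nat.Coprime g₂ (g₁ * q)) (hr : Nat.Coprime g₁ (g₂ * r)) {s : ℤ}
    (hs : r * s ≡ 1 [ZMOD m]) (u v : K) :
    (u ^ q * v ^ r = 1 ∧ u ^ (g₂ * m) = 1 ∧ v ^ (g₁ * m) = 1) ↔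
      ∃ k : ℤ, u = ζ ^ (k * (g₁ * g₂ : ℕ)) ∧ v = ζ ^ (k * (-q * s) * (g₁ * g₂ : ℕ)) := by
  have : NeZero (g₁ * g₂ * m) := ⟨by positivity⟩
  constructor
  · intro h
    obtain ⟨i, -, rfl⟩ := hζ.eq_pow_of_pow_eq_one (ξ := u)
      (by rw [show g₁ * g₂ * m = g₂ * m * g₁ by ring, pow_mul, h.2.1, one_pow])
    obtain ⟨j, -, rfl⟩ := hζ.eq_pow_of_pow_eq_one (ξ := v)
      (by rw [show g₁ * g₂ * m = g₁ * m * g₂ by ring, pow_mul, h.2.2, one_pow])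
    simpa only [zpow_natCast] using (hζ.zpow_fiber_iff hg₁ hg₂ hm hq hr hs i j).mp
      (by simpa only [zpow_natCast] using h)
  · rintro ⟨k, rfl, rfl⟩
    exact (hζ.zpow_fiber_iff hg₁ hg₂ hm hq hr hs _ _).mpr ⟨k, rfl, rfl⟩

end IsPrimitiveRoot

namespace Complex

theorem exp_two_pi_I_mul_div_eq_zpow (k : ℤ) {d m : ℕ} (hd : d ≠ 0) (hm : m ≠ 0) :
    exp (2 * π * I * k / m) = exp (2 * π * I / ↑(d * m)) ^ (k * d) := by
  rw [← exp_int_mul]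
  congr 1
  push_cast
  field_simp

theorem fiber_iff {g₁ g₂ m q r : ℕ} (hg₁ : g₁ ≠ 0) (hg₂ : g₂ ≠ 0) (hm : m ≠ 0)
    (hq : Nat.Coprime g₂ (g₁ * q)) (hr : Nat.Coprime g₁ (g₂ * r)) {s : ℤ}
    (hs : r * s ≡ 1 [ZMOD m]) {x₁ y₁ : ℂ} (hx₁ : x₁ ≠ 0) (hy₁ : y₁ ≠ 0) (x₂ y₂ : ℂ) :
    (x₁ ^ q * y₁ ^ r = x₂ ^ q * y₂ ^ r ∧ x₁ ^ (g₂ * m) = x₂ ^ (g₂ * m) ∧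
        y₁ ^ (g₁ * m) = y₂ ^ (g₁ * m)) ↔
      ∃ k : ℤ, x₂ = exp (2 * π * I * k / m) * x₁ ∧
        y₂ = exp (2 * π * I * ((k * (-q * s) : ℤ) : ℂ) / m) * y₁ := by
  obtain ⟨u, rfl⟩ : ∃ u, x₂ = u * x₁ := ⟨x₂ / x₁, (div_mul_cancel₀ _ hx₁).symm⟩
  obtain ⟨v, rfl⟩ : ∃ v, y₂ = v * y₁ := ⟨y₂ / y₁, (div_mul_cancel₀ _ hy₁).symm⟩
  simp only [exp_two_pi_I_mul_div_eq_zpow _ (mul_ne_zero hg₁ hg₂) hm, mul_left_inj' hx₁,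
    mul_left_inj' hy₁, mul_pow]
  rw [mul_mul_mul_comm, right_eq_mul₀ (mul_ne_zero (pow_ne_zero _ hx₁) (pow_ne_zero _ hy₁)),
    right_eq_mul₀ (pow_ne_zero _ hx₁), right_eq_mul₀ (pow_ne_zero _ hy₁)]
  exact (isPrimitiveRoot_exp _ (by positivity)).fiber_iff hg₁ hg₂ hm hq hr hs u v

end Complex

theorem fibers_of_normalization_map_general (p q r : ℕ) (hp : 0 < p)
    (hgcd : Nat.gcd p (Nat.gcd q r) = 1)
    (s : ℤ) (hs : ((r / Nat.gcd p r : ℕ) : ℤ) * s ≡ 1 [ZMOD ((p / Nat.gcd p r : ℕ) : ℤ)])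
    (x₁ y₁ x₂ y₂ : ℂ) (hx₁ : x₁ ≠ 0) (hy₁ : y₁ ≠ 0) :
    (x₁ ^ (q / Nat.gcd p q) * y₁ ^ (r / Nat.gcd p r)
          = x₂ ^ (q / Nat.gcd p q) * y₂ ^ (r / Nat.gcd p r) ∧
        x₁ ^ (p / Nat.gcd p q) = x₂ ^ (p / Nat.gcd p q) ∧
        y₁ ^ (p / Nat.gcd p r) = y₂ ^ (p / Nat.gcd p r))
      ↔ ∃ k : ℤ,
          x₂ = Complex.exp (2 * (Real.pi : ℂ) * Complex.I * (k : ℂ)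
                  / ((p / (Nat.gcd p q * Nat.gcd p r) : ℕ) : ℂ)) * x₁ ∧
          y₂ = Complex.exp (2 * (Real.pi : ℂ) * Complex.I
                  * ((k * (-((q / Nat.gcd p q : ℕ) : ℤ) * s) : ℤ) : ℂ)
                  / ((p / (Nat.gcd p q * Nat.gcd p r) : ℕ) : ℂ)) * y₁ := by
  set g₁ := p.gcd q
  set g₂ := p.gcd r
  have hg₁ : 0 < g₁ := Nat.gcd_pos_of_pos_left q hp
  have hg₂ : 0 < g₂ := Nat.gcd_pos_of_pos_left r hp
  have hg₂q : Nat.Coprime g₂ q := by rwa [Nat.Coprime, Nat.gcd_assoc, Nat.gcd_comm r]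
  have hg₁r : Nat.Coprime g₁ r := by rwa [Nat.Coprime, Nat.gcd_assoc]
  have hg₁₂ : g₁ * g₂ ∣ p := (hg₁r.coprime_dvd_right (p.gcd_dvd_right r)).mul_dvd_of_dvd_of_dvd
    (p.gcd_dvd_left q) (p.gcd_dvd_left r)
  have hq : g₁ ∣ q := p.gcd_dvd_right q
  have hr : g₂ ∣ r := p.gcd_dvd_right r
  clear_value g₁ g₂
  obtain ⟨m, rfl⟩ := hg₁₂
  obtain ⟨q, rfl⟩ := hq
  obtain ⟨r, rfl⟩ := hr
  have hp₁ : g₁ * g₂ * m / g₁ = g₂ * m := by rw [mul_assoc, Nat.mul_div_cancel_left _ hg₁]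
  have hp₂ : g₁ * g₂ * m / g₂ = g₁ * m := by rw [mul_right_comm, Nat.mul_div_cancel _ hg₂]
  simp only [Nat.mul_div_cancel_left _ hg₁, Nat.mul_div_cancel_left _ hg₂, hp₁, hp₂,
    Nat.mul_div_cancel_left _ (mul_pos hg₁ hg₂), Nat.cast_mul] at hs ⊢
  exact Complex.fiber_iff hg₁.ne' hg₂.ne' (right_ne_zero_of_mul hp.ne') hg₂q hg₁r
    (hs.of_mul_left _) hx₁ hy₁ x₂ y₂

/-- Let `p, q, r` be positive integers with `gcd(p,q,r) = 1`, set `g₁ = gcd(p,q)`,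
`g₂ = gcd(p,r)`, `m = p/(g₁·g₂)`, let `s` be an integer with `(r/g₂)·s ≡ 1 (mod p/g₂)`, and
set `n = −(q/g₁)·s`.  Then for all nonzero complex numbers `x₁, y₁, x₂, y₂`, the equalities
`x₁^{q/g₁}·y₁^{r/g₂} = x₂^{q/g₁}·y₂^{r/g₂}`, `x₁^{p/g₁} = x₂^{p/g₁}`, `y₁^{p/g₂} = y₂^{p/g₂}`
all hold iff there is an integer `k` with `x₂ = exp(2πi·k/m)·x₁` and
`y₂ = exp(2πi·k·n/m)·y₁`. -/
theorem fibers_of_normalization_map (p q r : ℕ) (hp : 0 < p) (hq : 0 < q) (hr : 0 < r)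
    (hgcd : Nat.gcd p (Nat.gcd q r) = 1)
    (s : ℤ) (hs : ((r / Nat.gcd p r : ℕ) : ℤ) * s ≡ 1 [ZMOD ((p / Nat.gcd p r : ℕ) : ℤ)])
    (x₁ y₁ x₂ y₂ : ℂ) (hx₁ : x₁ ≠ 0) (hy₁ : y₁ ≠ 0) (hx₂ : x₂ ≠ 0) (hy₂ : y₂ ≠ 0) :
    (x₁ ^ (q / Nat.gcd p q) * y₁ ^ (r / Nat.gcd p r)
          = x₂ ^ (q / Nat.gcd p q) * y₂ ^ (r / Nat.gcd p r) ∧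
        x₁ ^ (p / Nat.gcd p q) = x₂ ^ (p / Nat.gcd p q) ∧
        y₁ ^ (p / Nat.gcd p r) = y₂ ^ (p / Nat.gcd p r))
      ↔ ∃ k : ℤ,
          x₂ = Complex.exp (2 * (Real.pi : ℂ) * Complex.I * (k : ℂ)
                  / ((p / (Nat.gcd p q * Nat.gcd p r) : ℕ) : ℂ)) * x₁ ∧
          y₂ = Complex.exp (2 * (Real.pi : ℂ) * Complex.I
                  * ((k * (-((q / Nat.gcd p q : ℕ) : ℤ) * s) : ℤ) : ℂ)
                  / ((p / (Nat.gcd p q * Nat.gcd p r) : ℕ) : ℂ)) * y₁ :=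
  fibers_of_normalization_map_general p q r hp hgcd s hs x₁ y₁ x₂ y₂ hx₁ hy₁
end

section
/- Let a, b, c be integers with a > 0, c < 0, and a + b + c < 0, and set D = b² − 4ac. Define next(a,b,c) = (a, 2a+b, a+b+c) if 4a+2b+c ≤ 0 and next(a,b,c) = (−a−b−c, −2a−b, −a) otherwise; define prev(a,b,c) = (a, b−2a, a−b+c) if a−b+c ≤ 0 and prev(a,b,c) = (−c, −b+2c, −a+b−c) otherwise. Then: (1) next(a,b,c) = (a′,b′,c′) satisfies b′² − 4a′c′ = D, a′ > 0, c′ < 0, and a′+b′+c′ ≤ 0; (2) prev(a,b,c) = (a″,b″,c″) satisfies b″² − 4a″c″ = D, a″ > 0, c″ ≤ 0, and a″+b″+c″ < 0; (3) prev(next(a,b,c)) = (a,b,c) and next(prev(a,b,c)) = (a,b,c). -/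
/-- The "next prototype" operation on triples `(a, b, c)`. -/
def nextProto (P : ℤ × ℤ × ℤ) : ℤ × ℤ × ℤ :=
  if 4 * P.1 + 2 * P.2.1 + P.2.2 ≤ 0 then (P.1, 2 * P.1 + P.2.1, P.1 + P.2.1 + P.2.2)
  else (-P.1 - P.2.1 - P.2.2, -(2 * P.1) - P.2.1, -P.1)

/-- The "previous prototype" operation on triples `(a, b, c)`. -/
def prevProto (P : ℤ × ℤ × ℤ) : ℤ × ℤ × ℤ :=
  if P.1 - P.2.1 + P.2.2 ≤ 0 then (P.1, P.2.1 - 2 * P.1, P.1 - P.2.1 + P.2.2)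
  else (-P.2.2, -P.2.1 + 2 * P.2.2, -P.1 + P.2.1 - P.2.2)

/-- Let `a, b, c` be integers with `a > 0`, `c < 0` and `a + b + c < 0`, and set
`D = b² − 4ac`.  Then: (1) `next(a,b,c) = (a',b',c')` satisfies `b'² − 4a'c' = D`, `a' > 0`,
`c' < 0` and `a'+b'+c' ≤ 0`; (2) `prev(a,b,c) = (a'',b'',c'')` satisfies `b''² − 4a''c'' = D`,
`a'' > 0`, `c'' ≤ 0` and `a''+b''+c'' < 0`; (3) `prev(next(a,b,c)) = (a,b,c)` and
`next(prev(a,b,c)) = (a,b,c)`. -/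
theorem nextProto_prevProto (a b c : ℤ) (ha : 0 < a) (hc : c < 0) (habc : a + b + c < 0) :
    (∀ a' b' c' : ℤ, nextProto (a, b, c) = (a', b', c') →
        b' ^ 2 - 4 * a' * c' = b ^ 2 - 4 * a * c ∧ 0 < a' ∧ c' < 0 ∧ a' + b' + c' ≤ 0) ∧
    (∀ a' b' c' : ℤ, prevProto (a, b, c) = (a', b', c') →
        b' ^ 2 - 4 * a' * c' = b ^ 2 - 4 * a * c ∧ 0 < a' ∧ c' ≤ 0 ∧ a' + b' + c' < 0) ∧
    prevProto (nextProto (a, b, c)) = (a, b, c) ∧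
    nextProto (prevProto (a, b, c)) = (a, b, c) := by
  refine ⟨?_, ?_, ?_, ?_⟩
  · intro a' b' c' h
    simp only [nextProto] at h
    split_ifs at h with h1 <;> simp only [Prod.mk.injEq] at h <;>
      obtain ⟨rfl, rfl, rfl⟩ := h <;>
      refine ⟨by ring, by omega, by omega, by omega⟩
  · intro a' b' c' h
    simp only [prevProto] at h
    split_ifs at h with h1 <;> simp only [Prod.mk.injEq] at h <;>
      obtain ⟨rfl, rfl, rfl⟩ := h <;>
      refine ⟨by ring, by omega, by omega, by omega⟩
  · simp only [nextProto, prevProto]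
    split_ifs <;> simp_all <;> omega
  · simp only [nextProto, prevProto]
    split_ifs <;> simp_all <;> omega
end

section
/- Let a, b, c be integers with a > 0, c < 0, and a + b + c < 0, and let λ be the unique positive real number with aλ² + bλ + c = 0. Then λ > 1; moreover, if 4a + 2b + c ≤ 0 then λ − 1 is the unique positive real root of a·x² + (2a+b)·x + (a+b+c), while if 4a + 2b + c > 0 then 1/(λ − 1) is the unique positive real root of (−a−b−c)·x² + (−2a−b)·x + (−a). -/
/-! Shifting `x ↦ x + 1` and inverting `x ↦ 1 / x` turn roots of `A x² + B x + C` into roots of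
the two new quadratics. Each of them again has a positive leading coefficient and a negative
constant term, so the product of its roots is negative and it has exactly one positive root. -/

section Quadratic

variable {A B C : ℝ}

theorem eq_of_quadratic_eq_zero_of_pos (hA : 0 < A) (hC : C < 0) {x y : ℝ} (hx : 0 < x)
    (hy : 0 < y) (hxroot : A * x ^ 2 + B * x + C = 0) (hyroot : A * y ^ 2 + B * y + C = 0) :
    x = y := by
  by_contra hne
  have hsum : A * (x + y) + B = 0 := by
    have hfactor : (x - y) * (A * (x + y) + B) = 0 := by linear_combination hxroot - hyroot
    exact (mul_eq_zero.mp hfactor).resolve_left (sub_ne_zero.mpr hne)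
  have hprod : C = A * x * y := by linear_combination hxroot - x * hsum
  linarith [mul_pos (mul_pos hA hx) hy]

/-- On `[0, 1]` a convex quadratic lies below the chord through its values at `0` and `1`,
both negative. -/
theorem one_lt_of_quadratic_eq_zero (hA : 0 ≤ A) (hC : C < 0) (hABC : A + B + C < 0) {l : ℝ}
    (hl : 0 < l) (hroot : A * l ^ 2 + B * l + C = 0) : 1 < l := by
  by_contra! hl1
  have hchord : A * l ^ 2 + B * l + C = (1 - l) * C + l * (A + B + C) - A * l * (1 - l) := by
    ring
  nlinarith [mul_nonneg (mul_nonneg hA hl.le) (sub_nonneg.mpr hl1)]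

theorem quadratic_shift_eq_zero {l : ℝ} (hroot : A * l ^ 2 + B * l + C = 0) :
    A * (l - 1) ^ 2 + (2 * A + B) * (l - 1) + (A + B + C) = 0 := by
  linear_combination hroot

theorem quadratic_inv_shift_eq_zero {l : ℝ} (hl : l ≠ 1) (hroot : A * l ^ 2 + B * l + C = 0) :
    (-A - B - C) * (1 / (l - 1)) ^ 2 + (-(2 * A) - B) * (1 / (l - 1)) + -A = 0 := by
  have hl' : l - 1 ≠ 0 := sub_ne_zero.mpr hl
  field_simp
  linear_combination -hroot

end Quadratic

/-- Let `a, b, c` be integers with `a > 0`, `c < 0` and `a + b + c < 0`, and let `λ` be the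
unique positive real with `aλ² + bλ + c = 0`.  Then `λ > 1`; moreover if `4a + 2b + c ≤ 0`
then `λ − 1` is the unique positive real root of `a·x² + (2a+b)·x + (a+b+c)`, while if
`4a + 2b + c > 0` then `1/(λ − 1)` is the unique positive real root of
`(−a−b−c)·x² + (−2a−b)·x + (−a)`. -/
theorem lambda_of_nextProto (a b c : ℤ) (ha : 0 < a) (hc : c < 0) (habc : a + b + c < 0)
    (l : ℝ) (hl : 0 < l) (hroot : (a : ℝ) * l ^ 2 + (b : ℝ) * l + (c : ℝ) = 0) :
    1 < l ∧
      (4 * a + 2 * b + c ≤ 0 →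
        (0 < l - 1 ∧
          (a : ℝ) * (l - 1) ^ 2 + ((2 * a + b : ℤ) : ℝ) * (l - 1) + ((a + b + c : ℤ) : ℝ) = 0 ∧
          ∀ x : ℝ, 0 < x →
            (a : ℝ) * x ^ 2 + ((2 * a + b : ℤ) : ℝ) * x + ((a + b + c : ℤ) : ℝ) = 0 →
              x = l - 1)) ∧
      (0 < 4 * a + 2 * b + c →
        (0 < 1 / (l - 1) ∧
          ((-a - b - c : ℤ) : ℝ) * (1 / (l - 1)) ^ 2 + ((-(2 * a) - b : ℤ) : ℝ) * (1 / (l - 1))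
              + ((-a : ℤ) : ℝ) = 0 ∧
          ∀ x : ℝ, 0 < x →
            ((-a - b - c : ℤ) : ℝ) * x ^ 2 + ((-(2 * a) - b : ℤ) : ℝ) * x + ((-a : ℤ) : ℝ) = 0 →
              x = 1 / (l - 1))) := by
  have haR : (0 : ℝ) < a := by exact_mod_cast ha
  have hcR : (c : ℝ) < 0 := by exact_mod_cast hc
  have habcR : (a : ℝ) + b + c < 0 := by exact_mod_cast habc
  have hl1 : 1 < l := one_lt_of_quadratic_eq_zero haR.le hcR habcR hl hroot
  have hpos : 0 < l - 1 := sub_pos.mpr hl1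
  refine ⟨hl1, fun _ => ?_, fun _ => ?_⟩
  · push_cast
    have hshift := quadratic_shift_eq_zero hroot
    exact ⟨hpos, hshift, fun x hx hxroot =>
      eq_of_quadratic_eq_zero_of_pos haR habcR hx hpos hxroot hshift⟩
  · push_cast
    have hinv := quadratic_inv_shift_eq_zero hl1.ne' hroot
    have hinvpos : 0 < 1 / (l - 1) := one_div_pos.mpr hpos
    exact ⟨hinvpos, hinv, fun x hx hxroot =>
      eq_of_quadratic_eq_zero_of_pos (by linarith) (neg_neg_of_pos haR) hx hinvpos hxroot hinv⟩
end

section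
/- Let a, b, c be integers with a > 0, c < 0, and a + b + c < 0. Define t(a,b,c) = (a, −b, c) if a − b + c ≤ 0 and t(a,b,c) = (−c, b, −a) otherwise. Then t(a,b,c) = (a′,b′,c′) satisfies b′² − 4a′c′ = b² − 4ac, a′ > 0, c′ < 0, and a′ + b′ + c′ ≤ 0; moreover t(t(a,b,c)) = (a,b,c). -/
/-- The involution `t` on prototype triples `(a, b, c)`. -/
def protoInvolution (P : ℤ × ℤ × ℤ) : ℤ × ℤ × ℤ :=
  if P.1 - P.2.1 + P.2.2 ≤ 0 then (P.1, -P.2.1, P.2.2) else (-P.2.2, P.2.1, -P.1)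

/-- Let `a, b, c` be integers with `a > 0`, `c < 0` and `a + b + c < 0`.  Then
`t(a,b,c) = (a',b',c')` satisfies `b'² − 4a'c' = b² − 4ac`, `a' > 0`, `c' < 0` and
`a' + b' + c' ≤ 0`; moreover `t(t(a,b,c)) = (a,b,c)`. -/
theorem protoInvolution_involutive (a b c : ℤ) (ha : 0 < a) (hc : c < 0)
    (habc : a + b + c < 0) :
    (∀ a' b' c' : ℤ, protoInvolution (a, b, c) = (a', b', c') →
        b' ^ 2 - 4 * a' * c' = b ^ 2 - 4 * a * c ∧ 0 < a' ∧ c' < 0 ∧ a' + b' + c' ≤ 0) ∧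
    protoInvolution (protoInvolution (a, b, c)) = (a, b, c) := by
  simp only [protoInvolution]
  split_ifs with h1 h2 h3 <;> simp only [Prod.mk.injEq, neg_neg] at * <;>
    first
    | omega
    | · constructor
        · rintro a' b' c' ⟨rfl, rfl, rfl⟩
          refine ⟨by ring, by omega, by omega, by omega⟩
        · trivial
end
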